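/- Let a : ℂ → ℂ be a nonconstant entire function with a(w) ≠ 0 for all w, and let c ∈ ℂ with c ≠ 0 and |c| ≠ 1. If v ∈ ℝ⁴ satisfies ⟪v, W(a(w), c/a(w))⟫ = 0 for every w ∈ ℂ (complex bilinear Minkowski form), then v = 0. In particular, the minimal surface with Weierstrass data (μ, a, b) = (1, a, c/a) is not contained in any hyperplane of ℝ⁴₁. -/

import Mathlib

/-- The complex-bilinear extension of the Minkowski form to `ℂ⁴`. -/
noncomputable def minkC (x y : Fin 4 → ℂ) : ℂ :=
  -(x 0 * y 0) + x 1 * y 1 + x 2 * y 2 + x 3 * y 3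

/-- The Weierstrass vector `W(a,b) = (a+b, 1+ab, i(1−ab), a−b) ∈ ℂ⁴`. -/
noncomputable def W (a b : ℂ) : Fin 4 → ℂ :=
  ![a + b, 1 + a * b, Complex.I * (1 - a * b), a - b]

/-!
Multiplying `⟪v, W(a, c/a)⟫ = 0` by `a` gives a quadratic equation `α a² + κ a + β = 0`
with coefficients linear in `v`. A nonconstant continuous function on `ℂ` has a connected,
hence infinite, range, so the quadratic vanishes identically. Now `α = v₃ - v₀` and
`β = -c (v₀ + v₃)` with `c ≠ 0` give `v₀ = v₃ = 0`, while `κ = z + c z̄` for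
`z = v₁ + i v₂`, and `|z| = |c| |z|` with `|c| ≠ 1` forces `z = 0`.
-/

open Complex ComplexConjugate Polynomial

lemma mul_minkC_W_div (x : Fin 4 → ℂ) {a : ℂ} (ha : a ≠ 0) (c : ℂ) :
    a * minkC x (W a (c / a)) =
      (x 3 - x 0) * a ^ 2 + (x 1 * (1 + c) + I * x 2 * (1 - c)) * a + -c * (x 0 + x 3) := by
  simp only [minkC, W, Matrix.cons_val_zero, Matrix.cons_val_one, Matrix.cons_val_two,
    Matrix.cons_val_three, Matrix.head_cons, Matrix.tail_cons]
  field_simp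
  ring

lemma Set.range_nontrivial_of_not_exists_const {α β : Type*} [Nonempty α] {f : α → β}
    (hf : ¬∃ k, ∀ x, f x = k) : (Set.range f).Nontrivial := by
  by_contra h
  obtain ⟨x⟩ := ‹Nonempty α›
  exact hf ⟨f x, fun y ↦ (Set.not_nontrivial_iff.mp h) (Set.mem_range_self y)
    (Set.mem_range_self x)⟩

lemma quadratic_coeffs_eq_zero_of_infinite {K : Type*} [CommRing K] [IsDomain K]
    {α κ β : K} {s : Set K} (hs : s.Infinite) (h : ∀ z ∈ s, α * z ^ 2 + κ * z + β = 0) :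
    α = 0 ∧ κ = 0 ∧ β = 0 := by
  have hp : C α * X ^ 2 + C κ * X + C β = 0 :=
    eq_zero_of_infinite_isRoot _ (hs.mono fun z hz ↦ by simpa using h z hz)
  refine ⟨?_, ?_, ?_⟩
  · simpa using congrArg (coeff · 2) hp
  · simpa using congrArg (coeff · 1) hp
  · simpa using congrArg (coeff · 0) hp

lemma eq_zero_of_add_mul_conj_eq_zero {z c : ℂ} (hc : ‖c‖ ≠ 1)
    (h : z + c * conj z = 0) : z = 0 := by
  have hnorm : ‖c‖ * ‖z‖ = 1 * ‖z‖ := calc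
    ‖c‖ * ‖z‖ = ‖c * conj z‖ := by rw [norm_mul, norm_conj]
    _ = 1 * ‖z‖ := by rw [eq_neg_of_add_eq_zero_right h, norm_neg, one_mul]
  by_contra hz
  exact hc (mul_right_cancel₀ (norm_ne_zero_iff.mpr hz) hnorm)

lemma eq_zero_of_mul_one_add_add_I_mul_mul_one_sub {x y : ℝ} {c : ℂ} (hc : ‖c‖ ≠ 1)
    (h : x * (1 + c) + I * y * (1 - c) = 0) : x = 0 ∧ y = 0 := by
  have hz : (x + y * I : ℂ) = 0 := by
    refine eq_zero_of_add_mul_conj_eq_zero hc ?_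
    simp only [map_add, map_mul, conj_ofReal, conj_I]
    linear_combination h
  exact ⟨by simpa using congrArg re hz, by simpa using congrArg im hz⟩

theorem stmt12 (a : ℂ → ℂ) (ha : Differentiable ℂ a)
    (hnc : ¬∃ k : ℂ, ∀ w : ℂ, a w = k) (ha0 : ∀ w : ℂ, a w ≠ 0)
    (c : ℂ) (hc0 : c ≠ 0) (hc1 : ‖c‖ ≠ 1)
    (v : Fin 4 → ℝ)
    (hv : ∀ w : ℂ, minkC (fun i => ((v i : ℝ) : ℂ)) (W (a w) (c / a w)) = 0) :
    v = 0 := by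
  have hinf : (Set.range a).Infinite :=
    (isPreconnected_range ha.continuous).infinite_of_nontrivial
      (Set.range_nontrivial_of_not_exists_const hnc)
  obtain ⟨hα, hκ, hβ⟩ := quadratic_coeffs_eq_zero_of_infinite hinf <| by
    rintro _ ⟨w, rfl⟩
    have hw := mul_minkC_W_div (fun i ↦ (v i : ℂ)) (ha0 w) c
    rw [hv w, mul_zero] at hw
    exact hw.symm
  obtain ⟨hv1, hv2⟩ := eq_zero_of_mul_one_add_add_I_mul_mul_one_sub hc1 hκ
  have hdiff : v 3 - v 0 = 0 := by exact_mod_cast hα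
  have hsum : v 0 + v 3 = 0 := by exact_mod_cast (by simpa [hc0] using hβ : (v 0 : ℂ) + v 3 = 0)
  ext i
  fin_cases i
  · show v 0 = 0; linarith
  · exact hv1
  · exact hv2
  · show v 3 = 0; linarith
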